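/- Let G be an unweighted directed graph with m directed edges in which every vertex has indegree at least d ≥ 0, and let v ∈ V(G) be a vertex with ept_rzf(G,v) < ∞. Then ept_rzf(G,v) ≤ m − d. -/

import Mathlib

/-!
Let `Φ(B)` be the total indegree of the white vertices. From a blue set `B`, a white vertex `x`
turns blue with probability `|N⁻(x) ∩ B| / indeg x`, and `Φ` then drops by `indeg x`; so the
expected drop of `Φ` in one round is at least `|N⁻(x₀) ∩ B| ≥ 1` for any white `x₀` with a blue
in-neighbour. Such an `x₀` exists in every reachable unfinished state, since otherwise that state
is absorbing and the expected propagation time is infinite. Summing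
`E Φ(B_t) - E Φ(B_{t+1}) ≥ P(B_t ≠ V)` over `t` gives `ept(G, v) ≤ Φ({v}) = m - indeg v ≤ m - d`.
-/

open scoped ENNReal NNReal

namespace RZF

variable {V : Type*} [Fintype V] [DecidableEq V]

/-- Probability that the white vertex `x` turns blue in one round of weighted
randomized zero forcing with weights `w`, given the current blue set `B`
(`0` when the total incoming weight of `x` is `0`). -/
noncomputable def turnProb (w : V → V → ℝ≥0) (B : Finset V) (x : V) : ℝ≥0 :=
  (∑ u ∈ B, w u x) / ∑ u, w u x

/-- One-round transition probability of the RZF Markov chain from blue set `B`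
to blue set `C`: each white vertex independently turns blue with probability
`turnProb w B ·`, and blue vertices stay blue. -/
noncomputable def stepProb (w : V → V → ℝ≥0) (B C : Finset V) : ℝ≥0∞ :=
  if B ⊆ C then
    (∏ x ∈ C \ B, (turnProb w B x : ℝ≥0∞)) *
      ∏ x ∈ Cᶜ, (1 - (turnProb w B x : ℝ≥0∞))
  else 0

/-- Distribution of the blue set after `t` rounds, started from `S`. -/
noncomputable def state (w : V → V → ℝ≥0) (S : Finset V) : ℕ → Finset V → ℝ≥0∞
  | 0 => fun C => if C = S then 1 else 0
  | t + 1 => fun C => ∑ B : Finset V, state w S t B * stepProb w B C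

/-- Expected propagation time `∑ₜ P(Bₜ ≠ V(G))`; this equals `E[τ]` when the
all-blue state is reachable from `S`, and `∞` otherwise. -/
noncomputable def ept (w : V → V → ℝ≥0) (S : Finset V) : ℝ≥0∞ :=
  ∑' t : ℕ, ∑ C ∈ Finset.univ.filter (fun C : Finset V => C ≠ Finset.univ),
    state w S t C

/-- Minimum expected propagation time over singleton starting sets. -/
noncomputable def eptMin (w : V → V → ℝ≥0) : ℝ≥0∞ :=
  ⨅ v : V, ept w {v}

/-- The weight function of an unweighted directed graph: weight `1` on each
edge and `0` otherwise, so that `turnProb` is the fraction of in-neighbors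
that are blue. -/
def unweight (adj : V → V → Prop) [DecidableRel adj] : V → V → ℝ≥0 :=
  fun u v => if adj u v then 1 else 0

end RZF

/-- `reachIn adj t a b` : there is a directed path of length at most `t`
from `a` to `b` in the directed graph with adjacency relation `adj`. -/
def reachIn {V : Type*} (adj : V → V → Prop) : ℕ → V → V → Prop
  | 0, a, b => a = b
  | t + 1, a, b => reachIn adj t a b ∨ ∃ c, reachIn adj t a c ∧ adj c b

open Finset

theorem Finset.sum_prod_mul_prod_compl {ι R : Type*} [Fintype ι] [DecidableEq ι]
    [CommSemiring R] (f g : ι → R) :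
    ∑ s : Finset ι, (∏ i ∈ s, f i) * ∏ i ∈ sᶜ, g i = ∏ i, (f i + g i) := by
  simp_rw [prod_add, powerset_univ, compl_eq_univ_sdiff]

namespace RZF

theorem unweight_eq_zero_or_one_le {V : Type*} (adj : V → V → Prop) [DecidableRel adj]
    (u x : V) :
    unweight adj u x = 0 ∨ 1 ≤ unweight adj u x := by
  unfold unweight
  split_ifs <;> simp

variable {V : Type*} [Fintype V]

theorem turnProb_le_one (w : V → V → ℝ≥0) (B : Finset V) (x : V) : turnProb w B x ≤ 1 := by
  rcases eq_or_ne (∑ u, w u x) 0 with h | h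
  · simp [turnProb, h]
  · exact div_le_one_of_le₀ (sum_le_sum_of_subset (subset_univ B)) zero_le

def inWeight (w : V → V → ℝ≥0) (x : V) : ℝ≥0 := ∑ u, w u x

theorem turnProb_mul_inWeight (w : V → V → ℝ≥0) (B : Finset V) (x : V) :
    turnProb w B x * inWeight w x = ∑ u ∈ B, w u x := by
  rcases eq_or_ne (inWeight w x) 0 with h | h
  · rw [h, mul_zero, eq_comm, ← nonpos_iff_eq_zero, ← h]
    exact sum_le_sum_of_subset (subset_univ B)
  · exact div_mul_cancel₀ _ h

variable [DecidableEq V]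

noncomputable def memFactor (w : V → V → ℝ≥0) (B : Finset V) (x : V) : ℝ≥0∞ :=
  if x ∈ B then 1 else turnProb w B x

noncomputable def notMemFactor (w : V → V → ℝ≥0) (B : Finset V) (x : V) : ℝ≥0∞ :=
  if x ∈ B then 0 else 1 - turnProb w B x

theorem memFactor_add_notMemFactor (w : V → V → ℝ≥0) (B : Finset V) (x : V) :
    memFactor w B x + notMemFactor w B x = 1 := by
  unfold memFactor notMemFactor
  split_ifs
  · exact add_zero 1
  · exact add_tsub_cancel_of_le (by exact_mod_cast turnProb_le_one w B x)

variable {w : V → V → ℝ≥0} {B : Finset V}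

-- The factor `0` of blue vertices outside `C` encodes the condition `B ⊆ C`.
theorem stepProb_eq_prod (C : Finset V) :
    stepProb w B C = (∏ x ∈ C, memFactor w B x) * ∏ x ∈ Cᶜ, notMemFactor w B x := by
  unfold memFactor notMemFactor
  by_cases hBC : B ⊆ C
  · rw [stepProb, if_pos hBC, prod_ite, prod_const_one, one_mul, filter_not, filter_mem_eq_inter,
      sdiff_inter_self_left]
    exact congrArg _ (prod_congr rfl fun x hx => (if_neg fun hxB => mem_compl.1 hx (hBC hxB)).symm)
  · obtain ⟨x, hxB, hxC⟩ := not_subset.1 hBC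
    rw [stepProb, if_neg hBC, prod_eq_zero (mem_compl.2 hxC) (by simp [hxB]), mul_zero]

theorem stepProb_eq_zero_of_not_subset {C : Finset V} (h : ¬B ⊆ C) : stepProb w B C = 0 :=
  if_neg h

theorem sum_stepProb : ∑ C, stepProb w B C = 1 := by
  simp_rw [stepProb_eq_prod, sum_prod_mul_prod_compl, memFactor_add_notMemFactor, prod_const_one]

theorem sum_stepProb_filter_mem {x₀ : V} (hx₀ : x₀ ∉ B) :
    ∑ C with x₀ ∈ C, stepProb w B C = turnProb w B x₀ := by
  -- Zeroing the non-membership factor of `x₀` kills exactly the sets `C` with `x₀ ∉ C`.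
  have hkill : ∀ C, (if x₀ ∈ C then stepProb w B C else 0) =
      (∏ x ∈ C, memFactor w B x) * ∏ x ∈ Cᶜ, if x = x₀ then 0 else notMemFactor w B x := by
    intro C
    split_ifs with hC
    · rw [stepProb_eq_prod]
      exact congrArg _ (prod_congr rfl fun x hx =>
        (if_neg (by rintro rfl; exact mem_compl.1 hx hC)).symm)
    · rw [prod_eq_zero (mem_compl.2 hC) (by simp), mul_zero]
  rw [sum_filter, sum_congr rfl fun C _ => hkill C, sum_prod_mul_prod_compl,
    prod_eq_single x₀ (fun x _ hx => by rw [if_neg hx, memFactor_add_notMemFactor]) (by simp)]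
  simp [memFactor, hx₀]

theorem stepProb_univ (C : Finset V) : stepProb w univ C = if C = univ then 1 else 0 := by
  by_cases hC : C = univ
  · simp [stepProb, hC]
  · simp [stepProb, univ_subset_iff, hC]

theorem stepProb_self_eq_one (h : ∀ x ∉ B, ∀ u ∈ B, w u x = 0) : stepProb w B B = 1 := by
  rw [stepProb, if_pos subset_rfl, sdiff_self, bot_eq_empty, prod_empty, one_mul]
  refine prod_eq_one fun x hx => ?_
  simp [turnProb, sum_eq_zero (h x (mem_compl.1 hx))]

theorem sum_state_succ_mul (S : Finset V) (t : ℕ) (f : Finset V → ℝ≥0∞) :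
    ∑ C, state w S (t + 1) C * f C = ∑ B, state w S t B * ∑ C, stepProb w B C * f C := by
  simp_rw [state, sum_mul, mul_sum, mul_assoc]
  exact sum_comm

theorem state_le_state_add (S : Finset V) (hB : stepProb w B B = 1) (t s : ℕ) :
    state w S t B ≤ state w S (t + s) B := by
  induction s with
  | zero => rfl
  | succ s ih =>
    calc state w S t B ≤ state w S (t + s) B * stepProb w B B := by rwa [hB, mul_one]
      _ ≤ ∑ B', state w S (t + s) B' * stepProb w B' B :=
          single_le_sum (f := fun B' => state w S (t + s) B' * stepProb w B' B)
            (fun _ _ => zero_le) (mem_univ B)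

theorem ept_eq_top_of_absorbing {S : Finset V} {t : ℕ} (hB : B ≠ univ)
    (ht : state w S t B ≠ 0) (hBB : stepProb w B B = 1) : ept w S = ⊤ := by
  refine eq_top_iff.2 ?_
  calc ⊤ = ∑' _ : ℕ, state w S t B := (ENNReal.tsum_const_eq_top_of_ne_zero ht).symm
    _ ≤ ∑' s, ∑ C with C ≠ univ, state w S (t + s) C :=
        ENNReal.tsum_le_tsum fun s => (state_le_state_add S hBB t s).trans
          (single_le_sum (fun _ _ => zero_le) (mem_filter.2 ⟨mem_univ B, hB⟩))
    _ ≤ ept w S := ENNReal.tsum_comp_le_tsum_of_injective (add_right_injective t) _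

theorem ept_le_of_drift (S : Finset V) (f : Finset V → ℝ≥0∞)
    (hf : ∀ t B, state w S t B ≠ 0 → B ≠ univ → ∑ C, stepProb w B C * f C + 1 ≤ f B) :
    ept w S ≤ f S := by
  have hstep : ∀ t, ∑ C, state w S (t + 1) C * f C + ∑ C with C ≠ univ, state w S t C ≤
      ∑ C, state w S t C * f C := by
    intro t
    rw [sum_state_succ_mul, sum_filter, ← sum_add_distrib]
    refine sum_le_sum fun B _ => ?_
    by_cases h0 : state w S t B = 0
    · simp [h0]
    by_cases hB : B = univ
    · simp [hB, stepProb_univ]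
    · calc state w S t B * ∑ C, stepProb w B C * f C + (if B ≠ univ then state w S t B else 0)
          = state w S t B * (∑ C, stepProb w B C * f C + 1) := by rw [if_pos hB, mul_add, mul_one]
        _ ≤ state w S t B * f B := mul_le_mul_right (hf t B h0 hB) _
  have hpartial : ∀ T, ∑ C, state w S T C * f C +
      ∑ t ∈ range T, ∑ C with C ≠ univ, state w S t C ≤ f S := by
    intro T
    induction T with
    | zero => simp [state]
    | succ T ih =>
      calc _ = (∑ C, state w S (T + 1) C * f C + ∑ C with C ≠ univ, state w S T C) +
            ∑ t ∈ range T, ∑ C with C ≠ univ, state w S t C := by rw [sum_range_succ]; ring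
        _ ≤ _ := add_le_add_left (hstep T) _
        _ ≤ f S := ih
  exact ENNReal.summable.tsum_le_of_sum_range_le fun T => le_add_self.trans (hpartial T)

variable (w) in
noncomputable def potential (B : Finset V) : ℝ≥0∞ := ∑ x ∈ Bᶜ, (inWeight w x : ℝ≥0∞)

theorem potential_add_le {C : Finset V} (hBC : B ⊆ C) {x₀ : V} (hx₀ : x₀ ∉ B) :
    potential w C + (if x₀ ∈ C then (inWeight w x₀ : ℝ≥0∞) else 0) ≤ potential w B := by
  have hsub : Cᶜ ⊆ Bᶜ := compl_subset_compl.2 hBC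
  split_ifs with hC
  · rw [potential, add_comm, ← sum_insert (f := fun x => (inWeight w x : ℝ≥0∞))
      (fun h => mem_compl.1 h hC)]
    exact sum_le_sum_of_subset (insert_subset (mem_compl.2 hx₀) hsub)
  · rw [add_zero]
    exact sum_le_sum_of_subset hsub

theorem sum_stepProb_mul_potential_add_le {x₀ : V} (hx₀ : x₀ ∉ B) :
    ∑ C, stepProb w B C * potential w C + ∑ u ∈ B, (w u x₀ : ℝ≥0∞) ≤ potential w B := by
  have hcut : ∑ u ∈ B, (w u x₀ : ℝ≥0∞) =
      ∑ C, stepProb w B C * if x₀ ∈ C then (inWeight w x₀ : ℝ≥0∞) else 0 := by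
    simp_rw [mul_ite, mul_zero, ← sum_filter, ← sum_mul, sum_stepProb_filter_mem hx₀]
    exact_mod_cast (turnProb_mul_inWeight w B x₀).symm
  calc _ = ∑ C, stepProb w B C *
        (potential w C + if x₀ ∈ C then (inWeight w x₀ : ℝ≥0∞) else 0) := by
        simp_rw [hcut, mul_add, sum_add_distrib]
    _ ≤ ∑ C, stepProb w B C * potential w B := by
        refine sum_le_sum fun C _ => ?_
        by_cases hBC : B ⊆ C
        · exact mul_le_mul_right (potential_add_le hBC hx₀) _
        · rw [stepProb_eq_zero_of_not_subset hBC, zero_mul, zero_mul]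
    _ = potential w B := by rw [← sum_mul, sum_stepProb, one_mul]

theorem ept_le_potential (S : Finset V) (hw : ∀ u x, w u x = 0 ∨ 1 ≤ w u x)
    (hfin : ept w S ≠ ⊤) : ept w S ≤ potential w S := by
  refine ept_le_of_drift S _ fun t B ht hB => ?_
  obtain ⟨x₀, hx₀, u, hu, hux₀⟩ : ∃ x₀ ∉ B, ∃ u ∈ B, w u x₀ ≠ 0 := by
    by_contra! h
    exact hfin (ept_eq_top_of_absorbing hB ht (stepProb_self_eq_one h))
  have hone : 1 ≤ ∑ u ∈ B, (w u x₀ : ℝ≥0∞) :=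
    (by exact_mod_cast (hw u x₀).resolve_left hux₀ : (1 : ℝ≥0∞) ≤ w u x₀).trans
      (single_le_sum (f := fun u => (w u x₀ : ℝ≥0∞)) (fun _ _ => zero_le) hu)
  exact (add_le_add_right hone _).trans (sum_stepProb_mul_potential_add_le hx₀)

theorem potential_unweight (adj : V → V → Prop) [DecidableRel adj] (B : Finset V) :
    potential (unweight adj) B = ((∑ x ∈ Bᶜ, #{u | adj u x} : ℕ) : ℝ≥0∞) := by
  simp [potential, inWeight, unweight, sum_boole]

end RZF

/-- Let `G` be an unweighted directed graph with `m`
directed edges in which every vertex has indegree at least `d`, and let `v` be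
a vertex with finite expected propagation time. Then `ept_rzf(G, v) ≤ m - d`. -/
theorem rzf_ept_le_edges_sub_indeg {V : Type*} [Fintype V] [DecidableEq V]
    (adj : V → V → Prop) [DecidableRel adj] (d : ℕ)
    (hd : ∀ x : V, d ≤ (Finset.univ.filter (fun u => adj u x)).card)
    (v : V) (hfin : RZF.ept (RZF.unweight adj) {v} < ⊤) :
    RZF.ept (RZF.unweight adj) {v} ≤
      (((∑ u : V, (Finset.univ.filter (fun x => adj u x)).card) - d : ℕ) : ℝ≥0∞) := by
  have hedges : ∑ x ∈ {v}ᶜ, #{u | adj u x} + #{u | adj u v} = ∑ u, #{x | adj u x} := by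
    rw [← sum_singleton (fun x => #{u | adj u x}) v, sum_compl_add_sum]
    simp only [card_filter]
    exact sum_comm
  calc _ ≤ RZF.potential (RZF.unweight adj) {v} :=
        RZF.ept_le_potential {v} (RZF.unweight_eq_zero_or_one_le adj) hfin.ne
    _ = _ := RZF.potential_unweight adj {v}
    _ ≤ _ := by
        have := hd v
        gcongr
        omega
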